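/- Let α > 0 and f : ℝ → ℝ, f(x) = |x|^α. Then the pseudo 2-microlocal frontier of f at t₀ = 0 is Σ_{f,0}(s') = min(α + s', 1) for every s' ∈ ℝ. -/

import Mathlib

open MeasureTheory Metric Set Filter

noncomputable section

/-- The `n`-fold iterated integral of `f`, starting from `t₀`. -/
def iterInt (t₀ : ℝ) (f : ℝ → ℝ) : ℕ → ℝ → ℝ
  | 0 => f
  | n + 1 => fun t => ∫ s in t₀..t, iterInt t₀ f n s

/-- Membership in the pseudo 2-microlocal space `C̃^{σ,s'}_{t₀}`, relative to a domain `D`. -/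
def PseudoMemOn (D : Set ℝ) (f : ℝ → ℝ) (t₀ σ s' : ℝ) : Prop :=
  if 0 ≤ σ then
    ∃ C > (0:ℝ), ∃ ρ > (0:ℝ), ∀ u ∈ Metric.ball t₀ ρ ∩ D, ∀ v ∈ Metric.ball t₀ ρ ∩ D,
      |f u - f v| ≤ C * |u - v| ^ σ * (|u - t₀| + |v - t₀|) ^ (-s')
  else
    ∃ C > (0:ℝ), ∃ ρ > (0:ℝ), ∀ u ∈ Metric.ball t₀ ρ ∩ D, ∀ v ∈ Metric.ball t₀ ρ ∩ D,
      |iterInt t₀ (fun s => f s - f t₀) (-⌊σ⌋).toNat u -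
          iterInt t₀ (fun s => f s - f t₀) (-⌊σ⌋).toNat v| ≤
        C * |u - v| ^ (σ + ((-⌊σ⌋).toNat : ℝ)) * (|u - t₀| + |v - t₀|) ^ (-s')

/-- The pseudo 2-microlocal frontier `Σ_{f,t₀}(s')`, relative to a domain `D`. -/
def pseudoFrontierOn (D : Set ℝ) (f : ℝ → ℝ) (t₀ s' : ℝ) : EReal :=
  sSup {x : EReal | ∃ σ : ℝ, x = (σ : EReal) ∧ PseudoMemOn D f t₀ σ s'}

/-- The pseudo pointwise Hölder exponent `ᾱ_{f,t₀}`, relative to a domain `D`. -/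
def pseudoPointwiseExpOn (D : Set ℝ) (f : ℝ → ℝ) (t₀ : ℝ) : EReal :=
  sSup {x : EReal | ∃ α : ℝ, x = (α : EReal) ∧
    Filter.limsup
      (fun ρ : ℝ => ⨆ u ∈ Metric.ball t₀ ρ ∩ D, ⨆ v ∈ Metric.ball t₀ ρ ∩ D,
        ENNReal.ofReal (|f u - f v| / ρ ^ α)) (nhdsWithin 0 (Set.Ioi 0)) < ⊤}

/-- The pseudo local Hölder exponent `α̃_{f,t₀}`, relative to a domain `D`. -/
def pseudoLocalExpOn (D : Set ℝ) (f : ℝ → ℝ) (t₀ : ℝ) : EReal :=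
  sSup {x : EReal | ∃ α : ℝ, x = (α : EReal) ∧
    Filter.limsup
      (fun ρ : ℝ => ⨆ u ∈ Metric.ball t₀ ρ ∩ D, ⨆ v ∈ Metric.ball t₀ ρ ∩ D,
        ENNReal.ofReal (|f u - f v| / |u - v| ^ α)) (nhdsWithin 0 (Set.Ioi 0)) < ⊤}



def PseudoMemOn' (f : ℝ → ℝ) (σ s' : ℝ) : Prop :=
    ∃ C > (0:ℝ), ∃ ρ > (0:ℝ), ∀ u ∈ Metric.ball (0:ℝ) ρ ∩ Set.univ,
      ∀ v ∈ Metric.ball (0:ℝ) ρ ∩ Set.univ,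
      |f u - f v| ≤ C * |u - v| ^ σ * (|u - 0| + |v - 0|) ^ (-s')

namespace PFhelp

lemma self_le_rpow' {x σ : ℝ} (hx0 : 0 ≤ x) (hx1 : x ≤ 1) (hσ0 : 0 ≤ σ) (hσ1 : σ ≤ 1) :
    x ≤ x ^ σ := by
  rcases eq_or_lt_of_le hx0 with h | h
  · simp only [← h]
    rcases eq_or_lt_of_le hσ0 with h2 | h2
    · simp [← h2]
    · rw [Real.zero_rpow h2.ne']
  · calc x = x ^ (1:ℝ) := (Real.rpow_one x).symm
      _ ≤ x ^ σ := Real.rpow_le_rpow_of_exponent_ge h hx1 hσ1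

lemma bern {β t : ℝ} (hβ : 0 < β) (ht0 : 0 ≤ t) (ht1 : t ≤ 1) :
    1 - t ^ β ≤ max β 1 * (1 - t) := by
  rcases le_total 1 β with h | h
  · have := one_add_mul_self_le_rpow_one_add (s := t - 1) (by linarith) h
    rw [show (1 : ℝ) + (t - 1) = t by ring] at this
    have hm : max β 1 = β := max_eq_left h
    nlinarith
  · have h1 : t ≤ t ^ β := self_le_rpow' ht0 ht1 hβ.le h
    have hm : (1:ℝ) ≤ max β 1 := le_max_right _ _
    nlinarith

/-- Lemma A -/
lemma lemA {β σ a b : ℝ} (hβ : 0 < β) (hσ0 : 0 ≤ σ) (hσ1 : σ ≤ 1)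
    (hb : 0 ≤ b) (hba : b ≤ a) :
    a ^ β - b ^ β ≤ max β 1 * (a - b) ^ σ * a ^ (β - σ) := by
  have ha : 0 ≤ a := hb.trans hba
  rcases eq_or_lt_of_le ha with h | h
  · have hb0 : b = 0 := le_antisymm (h ▸ hba) hb
    simp only [← h, hb0, sub_zero]
    have : (0:ℝ) ^ β = 0 := Real.zero_rpow hβ.ne'
    rw [this, sub_self]
    positivity
  · set t := b / a with htdef
    have ht0 : 0 ≤ t := div_nonneg hb h.le
    have ht1 : t ≤ 1 := (div_le_one h).2 hba
    have hbt : b = t * a := by rw [htdef, div_mul_cancel₀ _ h.ne']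
    have key : a ^ β - b ^ β = a ^ β * (1 - t ^ β) := by
      rw [hbt, Real.mul_rpow ht0 h.le]; ring
    have h1 : 1 - t ^ β ≤ max β 1 * (1 - t) := bern hβ ht0 ht1
    have h2 : 1 - t ≤ (1 - t) ^ σ := self_le_rpow' (by linarith) (by linarith) hσ0 hσ1
    have hab : a - b = a * (1 - t) := by rw [hbt]; ring
    have h3 : a ^ β - b ^ β ≤ a ^ β * (max β 1 * (1 - t) ^ σ) := by
      rw [key]
      have hm : (0:ℝ) ≤ max β 1 := le_trans zero_le_one (le_max_right _ _)
      have : 1 - t ^ β ≤ max β 1 * (1 - t) ^ σ :=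
        h1.trans (by nlinarith)
      nlinarith [Real.rpow_pos_of_pos h β]
    calc a ^ β - b ^ β ≤ a ^ β * (max β 1 * (1 - t) ^ σ) := h3
      _ = max β 1 * (a - b) ^ σ * a ^ (β - σ) := by
          rw [hab, Real.mul_rpow h.le (by linarith)]
          rw [show a ^ β = a ^ σ * a ^ (β - σ) by
            rw [← Real.rpow_add h]; ring_nf]
          ring

lemma bnd1 {β σ a b d : ℝ} (hβ : 0 < β) (hσ0 : 0 ≤ σ) (hσ1 : σ ≤ 1)
    (hb : 0 ≤ b) (hba : b ≤ a) (had : a - b ≤ d) :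
    |a ^ β - b ^ β| ≤ max β 1 * d ^ σ * a ^ (β - σ) := by
  have ha : 0 ≤ a := hb.trans hba
  have h1 : b ^ β ≤ a ^ β := Real.rpow_le_rpow hb hba hβ.le
  rw [abs_of_nonneg (by linarith)]
  refine (lemA hβ hσ0 hσ1 hb hba).trans ?_
  have h2 : (a - b) ^ σ ≤ d ^ σ := Real.rpow_le_rpow (by linarith) had hσ0
  have hm : (0:ℝ) ≤ max β 1 := le_trans zero_le_one (le_max_right _ _)
  have h3 := Real.rpow_nonneg ha (β - σ)
  have := mul_le_mul_of_nonneg_right (mul_le_mul_of_nonneg_left h2 hm) h3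
  linarith

lemma bnd2 {β σ a b d : ℝ} (hβ : 0 < β) (hσ0 : 0 ≤ σ) (hσ1 : σ ≤ 1)
    (hb : 0 ≤ b) (hba : b ≤ a) (ha : 0 < a) (had : a ≤ d) :
    a ^ β + b ^ β ≤ 2 * max β 1 * d ^ σ * a ^ (β - σ) := by
  have h1 : b ^ β ≤ a ^ β := Real.rpow_le_rpow hb hba hβ.le
  have h2 : a ^ β = a ^ σ * a ^ (β - σ) := by rw [← Real.rpow_add ha]; ring_nf
  have h3 : a ^ σ ≤ d ^ σ := Real.rpow_le_rpow ha.le had hσ0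
  have hm : (1:ℝ) ≤ max β 1 := le_max_right _ _
  have h4 := Real.rpow_nonneg ha.le (β - σ)
  have h5 := Real.rpow_nonneg ha.le σ
  have h6 : a ^ σ * a ^ (β - σ) ≤ d ^ σ * a ^ (β - σ) := mul_le_mul_of_nonneg_right h3 h4
  have h7 : (0:ℝ) ≤ d ^ σ * a ^ (β - σ) := le_trans (mul_nonneg h5 h4) h6
  nlinarith

/-- convert `a ^ (β - σ)` to `R ^ (β - σ)` for `a ≤ R ≤ 2a`. -/
lemma base_conv {β σ a R : ℝ} (hβ : 0 ≤ β) (hσ0 : 0 ≤ σ) (ha : 0 < a) (h1 : a ≤ R) (h2 : R ≤ 2 * a) :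
    a ^ (β - σ) ≤ 2 ^ σ * R ^ (β - σ) := by
  have hR : 0 < R := ha.trans_le h1
  have h2σ : (1:ℝ) ≤ 2 ^ σ := Real.one_le_rpow one_le_two hσ0
  rcases le_total σ β with h | h
  · have : a ^ (β - σ) ≤ R ^ (β - σ) := Real.rpow_le_rpow ha.le h1 (by linarith)
    nlinarith [Real.rpow_nonneg hR.le (β - σ)]
  · have e1 : R ^ (σ - β) ≤ 2 ^ σ * a ^ (σ - β) := by
      calc R ^ (σ - β) ≤ (2 * a) ^ (σ - β) :=
            Real.rpow_le_rpow hR.le h2 (by linarith)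
        _ = 2 ^ (σ - β) * a ^ (σ - β) := Real.mul_rpow (by norm_num) ha.le
        _ ≤ 2 ^ σ * a ^ (σ - β) := by
            have := Real.rpow_le_rpow_of_exponent_le (x := 2) one_le_two
              (by linarith : σ - β ≤ σ)
            nlinarith [Real.rpow_nonneg ha.le (σ - β)]
    have ea : a ^ (β - σ) = (a ^ (σ - β))⁻¹ := by
      rw [← Real.rpow_neg ha.le]; ring_nf
    have eR : R ^ (β - σ) = (R ^ (σ - β))⁻¹ := by
      rw [← Real.rpow_neg hR.le]; ring_nf
    have hpa : (0:ℝ) < a ^ (σ - β) := Real.rpow_pos_of_pos ha _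
    have hpR : (0:ℝ) < R ^ (σ - β) := Real.rpow_pos_of_pos hR _
    rw [ea, eR, inv_eq_one_div, inv_eq_one_div, mul_one_div,
      div_le_div_iff₀ hpa hpR]
    linarith [e1]

lemma lemB_wlog {β σ : ℝ} (hβ : 0 < β) (hσ0 : 0 ≤ σ) (hσ1 : σ ≤ 1) (k : ℕ) {u v : ℝ}
    (hvu : |v| ≤ |u|) :
    |(Real.sign u) ^ k * |u| ^ β - (Real.sign v) ^ k * |v| ^ β|
      ≤ 2 * max β 1 * |u - v| ^ σ * |u| ^ (β - σ) := by
  have hm : (1:ℝ) ≤ max β 1 := le_max_right _ _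
  have hd0 : (0:ℝ) ≤ |u - v| := abs_nonneg _
  rcases eq_or_lt_of_le (abs_nonneg u) with h0 | ha
  · -- u = 0, hence v = 0
    have hu : u = 0 := abs_eq_zero.1 h0.symm
    have hv : v = 0 := abs_eq_zero.1 (le_antisymm (h0 ▸ hvu) (abs_nonneg v))
    subst hu; subst hv
    simp only [abs_zero, Real.zero_rpow hβ.ne', mul_zero, sub_zero, abs_zero]
    positivity
  · have hab : |u| - |v| ≤ |u - v| := abs_sub_abs_le_abs_sub u v
    have key1 : |(|u|:ℝ) ^ β - |v| ^ β| ≤ max β 1 * |u - v| ^ σ * |u| ^ (β - σ) :=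
      bnd1 hβ hσ0 hσ1 (abs_nonneg v) hvu hab
    have hb4 : (0:ℝ) ≤ max β 1 * |u - v| ^ σ * |u| ^ (β - σ) := by positivity
    rcases lt_trichotomy v 0 with hv | hv | hv
    · rcases lt_trichotomy u 0 with hu | hu | hu
      · -- both negative: common sign factor
        rw [Real.sign_of_neg hu, Real.sign_of_neg hv, ← mul_sub, abs_mul, abs_pow,
          abs_neg, abs_one, one_pow, one_mul]
        linarith [key1, abs_nonneg ((|u|:ℝ) ^ β - |v| ^ β)]
      · exact absurd (hu ▸ ha) (by simp)
      · -- u > 0 > v : opposite signs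
        have hda : |u| ≤ |u - v| := by
          rw [abs_of_pos hu, abs_of_pos (by linarith : 0 < u - v)]; linarith
        have tri : |(Real.sign u) ^ k * |u| ^ β - (Real.sign v) ^ k * |v| ^ β|
            ≤ |u| ^ β + |v| ^ β := by
          refine (abs_sub _ _).trans ?_
          rw [abs_mul, abs_mul, abs_pow, abs_pow, Real.sign_of_pos hu, Real.sign_of_neg hv,
            abs_one, abs_neg, abs_one, one_pow, one_mul, one_mul,
            abs_of_nonneg (Real.rpow_nonneg (abs_nonneg u) β),
            abs_of_nonneg (Real.rpow_nonneg (abs_nonneg v) β)]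
        refine tri.trans ?_
        have := bnd2 (d := |u - v|) hβ hσ0 hσ1 (abs_nonneg v) hvu ha hda
        linarith
    · -- v = 0
      subst hv
      have hu0 : u ≠ 0 := by
        intro h; rw [h] at ha; simp at ha
      have hs : |Real.sign u| = 1 := by
        rcases lt_or_gt_of_ne hu0 with h | h
        · rw [Real.sign_of_neg h]; norm_num
        · rw [Real.sign_of_pos h]; norm_num
      simp only [abs_zero, Real.zero_rpow hβ.ne', mul_zero, sub_zero] at key1 ⊢
      rw [abs_mul, abs_pow, hs, one_pow, one_mul,
        abs_of_nonneg (Real.rpow_nonneg (abs_nonneg u) β)]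
      rw [abs_of_nonneg (Real.rpow_nonneg (abs_nonneg u) β)] at key1
      have hb5 : (0:ℝ) ≤ max β 1 * |u| ^ σ * |u| ^ (β - σ) := by positivity
      linarith
    · rcases lt_trichotomy u 0 with hu | hu | hu
      · -- u < 0 < v : opposite
        have hda : |u| ≤ |u - v| := by
          rw [abs_of_neg hu, abs_of_neg (by linarith : u - v < 0)]; linarith
        have tri : |(Real.sign u) ^ k * |u| ^ β - (Real.sign v) ^ k * |v| ^ β|
            ≤ |u| ^ β + |v| ^ β := by
          refine (abs_sub _ _).trans ?_
          rw [abs_mul, abs_mul, abs_pow, abs_pow, Real.sign_of_neg hu, Real.sign_of_pos hv,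
            abs_one, abs_neg, abs_one, one_pow, one_mul, one_mul,
            abs_of_nonneg (Real.rpow_nonneg (abs_nonneg u) β),
            abs_of_nonneg (Real.rpow_nonneg (abs_nonneg v) β)]
        refine tri.trans ?_
        have := bnd2 (d := |u - v|) hβ hσ0 hσ1 (abs_nonneg v) hvu ha hda
        linarith
      · exact absurd (hu ▸ ha) (by simp)
      · -- both positive
        rw [Real.sign_of_pos hu, Real.sign_of_pos hv, one_pow, one_mul, one_mul]
        linarith [key1, abs_nonneg ((|u|:ℝ) ^ β - |v| ^ β)]

lemma lemB {β σ : ℝ} (hβ : 0 < β) (hσ0 : 0 ≤ σ) (hσ1 : σ ≤ 1) (k : ℕ) (u v : ℝ) :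
    |(Real.sign u) ^ k * |u| ^ β - (Real.sign v) ^ k * |v| ^ β|
      ≤ 2 * max β 1 * 2 ^ σ * (|u - v| ^ σ * (|u| + |v|) ^ (β - σ)) := by
  have hM : (0:ℝ) ≤ 2 * max β 1 := by positivity
  rcases le_total (|v|) (|u|) with hvu | huv
  · -- |v| ≤ |u|
    rcases eq_or_lt_of_le (abs_nonneg u) with h0 | ha
    · have hu : u = 0 := abs_eq_zero.1 h0.symm
      have hv : v = 0 := abs_eq_zero.1 (le_antisymm (h0 ▸ hvu) (abs_nonneg v))
      subst hu; subst hv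
      simp only [abs_zero, Real.zero_rpow hβ.ne', mul_zero, sub_zero, abs_zero]
      positivity
    · have core := lemB_wlog (σ := σ) hβ hσ0 hσ1 k hvu
      have conv := base_conv (σ := σ) hβ.le hσ0 ha
        (le_add_of_nonneg_right (abs_nonneg v)) (by linarith)
      have hdσ : (0:ℝ) ≤ |u - v| ^ σ := Real.rpow_nonneg (abs_nonneg _) σ
      have step := mul_le_mul_of_nonneg_left conv hdσ
      nlinarith [core, step, hM]
  · -- symmetric case
    rcases eq_or_lt_of_le (abs_nonneg v) with h0 | hb
    · have hv : v = 0 := abs_eq_zero.1 h0.symm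
      have hu : u = 0 := abs_eq_zero.1 (le_antisymm (h0 ▸ huv) (abs_nonneg u))
      subst hu; subst hv
      simp only [abs_zero, Real.zero_rpow hβ.ne', mul_zero, sub_zero, abs_zero]
      positivity
    · have core := lemB_wlog (σ := σ) hβ hσ0 hσ1 k huv
      have conv := base_conv (σ := σ) hβ.le hσ0 hb
        (le_add_of_nonneg_right (abs_nonneg u)) (by linarith)
      have hdσ : (0:ℝ) ≤ |v - u| ^ σ := Real.rpow_nonneg (abs_nonneg _) σ
      have step := mul_le_mul_of_nonneg_left conv hdσ
      rw [abs_sub_comm, abs_sub_comm u v, add_comm (|u|) (|v|)]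
      nlinarith [core, step, hM]

/-- The basic integral computation. -/
lemma integral_sign_abs_rpow {β : ℝ} (hβ : 0 < β) (k : ℕ) (t : ℝ) :
    ∫ s in (0:ℝ)..t, (Real.sign s) ^ k * |s| ^ β
      = (Real.sign t) ^ (k + 1) * |t| ^ (β + 1) / (β + 1) := by
  have hb1 : (0:ℝ) < β + 1 := by linarith
  have key : ∀ r : ℝ, 0 ≤ r →
      ∫ s in (0:ℝ)..r, (Real.sign s) ^ k * |s| ^ β = r ^ (β + 1) / (β + 1) := by
    intro r hr
    have : ∫ s in (0:ℝ)..r, (Real.sign s) ^ k * |s| ^ β = ∫ s in (0:ℝ)..r, s ^ β := by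
      apply intervalIntegral.integral_congr
      intro x hx
      rw [Set.uIcc_of_le hr] at hx
      simp only
      rcases eq_or_lt_of_le hx.1 with h | h
      · simp [← h, Real.zero_rpow hβ.ne']
      · rw [Real.sign_of_pos h, one_pow, one_mul, abs_of_pos h]
    rw [this, integral_rpow (Or.inl (by linarith))]
    rw [Real.zero_rpow (by positivity : β + 1 ≠ 0)]
    ring
  rcases le_or_gt 0 t with ht | ht
  · rw [key t ht]
    rcases eq_or_lt_of_le ht with h | h
    · simp [← h, Real.zero_rpow hb1.ne']
    · rw [Real.sign_of_pos h, one_pow, one_mul, abs_of_pos h]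
  · have h1 := intervalIntegral.integral_comp_neg (a := (0:ℝ)) (b := -t)
      (fun s => (Real.sign s) ^ k * |s| ^ β)
    rw [neg_neg, neg_zero] at h1
    have hneg : ∫ s in (0:ℝ)..t, (Real.sign s) ^ k * |s| ^ β
        = - ∫ s in (0:ℝ)..(-t), (Real.sign (-s)) ^ k * |(-s)| ^ β := by
      rw [show (∫ s in (0:ℝ)..(-t), (Real.sign (-s)) ^ k * |(-s)| ^ β)
          = ∫ s in (0:ℝ)..(-t), (fun s => (Real.sign s) ^ k * |s| ^ β) (-s) from rfl, h1]
      exact intervalIntegral.integral_symm t 0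
    have heq : ∀ s : ℝ, (Real.sign (-s)) ^ k * |(-s)| ^ β
        = (-1) ^ k * ((Real.sign s) ^ k * |s| ^ β) := by
      intro s
      rw [Real.sign_neg, abs_neg, neg_pow]
      ring
    rw [hneg]
    simp only [heq]
    rw [intervalIntegral.integral_const_mul, key (-t) (by linarith)]
    rw [Real.sign_of_neg ht, abs_of_neg ht]
    rw [show (-1:ℝ) ^ (k+1) = (-1)^k * (-1) by ring]
    field_simp
lemma prod_pos {α : ℝ} (hα : 0 < α) (n : ℕ) :
    0 < ∏ k ∈ Finset.range n, (α + k + 1) := by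
  apply Finset.prod_pos
  intro k _
  positivity

lemma iterInt_formula {α : ℝ} (hα : 0 < α) (n : ℕ) (t : ℝ) :
    iterInt 0 (fun x => |x| ^ α) n t
      = (∏ k ∈ Finset.range n, (α + k + 1))⁻¹ * ((Real.sign t) ^ n * |t| ^ (α + n)) := by
  induction n generalizing t with
  | zero => simp [iterInt]
  | succ n ih =>
    have hP := prod_pos hα n
    have hβ : (0:ℝ) < α + n := by positivity
    rw [show iterInt 0 (fun x => |x| ^ α) (n+1) t
        = ∫ s in (0:ℝ)..t, iterInt 0 (fun x => |x| ^ α) n s from rfl]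
    rw [intervalIntegral.integral_congr
      (g := fun s => (∏ k ∈ Finset.range n, (α + k + 1))⁻¹
        * ((Real.sign s) ^ n * |s| ^ (α + n))) (fun s _ => ih s)]
    rw [intervalIntegral.integral_const_mul, integral_sign_abs_rpow hβ n t,
      Finset.prod_range_succ]
    rw [show α + (n:ℝ) + 1 = α + (((n:ℕ) + 1 : ℕ) : ℝ) by push_cast; ring]
    have h1 : (0:ℝ) < α + (((n:ℕ) + 1 : ℕ) : ℝ) := by positivity
    field_simp
lemma fun_sub_zero {α : ℝ} (hα : 0 < α) :
    (fun s : ℝ => (fun x : ℝ => |x| ^ α) s - (fun x : ℝ => |x| ^ α) 0)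
      = fun x : ℝ => |x| ^ α := by
  funext s
  simp [Real.zero_rpow hα.ne']

lemma mem_nonneg {α σ s' : ℝ} (hα : 0 < α) (hσ0 : 0 ≤ σ) (hσ1 : σ ≤ 1)
    (hσ2 : σ ≤ α + s') :
    PseudoMemOn Set.univ (fun x : ℝ => |x| ^ α) 0 σ s' := by
  rw [PseudoMemOn, if_pos hσ0]
  refine ⟨2 * max α 1 * 2 ^ σ, by positivity, 1/2, by norm_num, ?_⟩
  rintro u ⟨hu, -⟩ v ⟨hv, -⟩
  rw [Metric.mem_ball, Real.dist_eq, sub_zero] at hu hv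
  simp only [sub_zero]
  have core := lemB hα hσ0 hσ1 0 u v
  simp only [pow_zero, one_mul] at core
  rcases eq_or_lt_of_le (by positivity : (0:ℝ) ≤ |u| + |v|) with hR | hR
  · have hu0 : u = 0 := abs_eq_zero.1 (by nlinarith [abs_nonneg u, abs_nonneg v])
    have hv0 : v = 0 := abs_eq_zero.1 (by nlinarith [abs_nonneg u, abs_nonneg v])
    subst hu0; subst hv0
    simp only [abs_zero, Real.zero_rpow hα.ne', sub_zero, sub_self, abs_zero]
    positivity
  · have hR1 : |u| + |v| ≤ 1 := by linarith
    have hexp : (|u| + |v|) ^ (α - σ) ≤ (|u| + |v|) ^ (-s') :=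
      Real.rpow_le_rpow_of_exponent_ge hR hR1 (by linarith)
    have hd : (0:ℝ) ≤ |u - v| ^ σ := Real.rpow_nonneg (abs_nonneg _) _
    have hC : (0:ℝ) ≤ 2 * max α 1 * 2 ^ σ := by positivity
    calc |(|u|:ℝ) ^ α - |v| ^ α|
        ≤ 2 * max α 1 * 2 ^ σ * (|u - v| ^ σ * (|u| + |v|) ^ (α - σ)) := core
      _ ≤ 2 * max α 1 * 2 ^ σ * (|u - v| ^ σ * (|u| + |v|) ^ (-s')) := by
          apply mul_le_mul_of_nonneg_left _ hC
          exact mul_le_mul_of_nonneg_left hexp hd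
      _ = 2 * max α 1 * 2 ^ σ * |u - v| ^ σ * (|u| + |v|) ^ (-s') := by ring

lemma mem_neg {α s' : ℝ} (hα : 0 < α) (hσn : α + s' < 0) :
    PseudoMemOn Set.univ (fun x : ℝ => |x| ^ α) 0 (α + s') s' := by
  set σ := α + s' with hσdef
  rw [PseudoMemOn, if_neg (not_le.2 hσn)]
  have hfl : ⌊σ⌋ < 0 := Int.floor_lt.2 (by exact_mod_cast hσn)
  set m : ℕ := (-⌊σ⌋).toNat with hmdef
  have hmcast : (m : ℝ) = -(⌊σ⌋ : ℝ) := by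
    have h2 : ((-⌊σ⌋).toNat : ℤ) = -⌊σ⌋ := Int.toNat_of_nonneg (by omega)
    rw [hmdef, ← Int.cast_natCast (R := ℝ), h2]
    push_cast; ring
  have hμ0 : 0 ≤ σ + (m:ℝ) := by
    rw [hmcast]
    have := Int.floor_le σ
    linarith
  have hμ1 : σ + (m:ℝ) ≤ 1 := by
    rw [hmcast]
    have := Int.lt_floor_add_one σ
    linarith
  have hβ : (0:ℝ) < α + (m:ℝ) := by
    have hm1 : 1 ≤ m := by
      rw [hmdef]; omega
    have : (1:ℝ) ≤ (m:ℝ) := by exact_mod_cast hm1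
    linarith
  have hP := prod_pos hα m
  refine ⟨(∏ k ∈ Finset.range m, (α + k + 1))⁻¹ * (2 * max (α + (m:ℝ)) 1 * 2 ^ (σ + (m:ℝ))),
    by positivity, 1, one_pos, ?_⟩
  rintro u ⟨hu, -⟩ v ⟨hv, -⟩
  simp only [sub_zero]
  rw [fun_sub_zero hα, iterInt_formula hα m u, iterInt_formula hα m v]
  have core := lemB hβ hμ0 hμ1 m u v
  have key : |(∏ k ∈ Finset.range m, (α + k + 1))⁻¹ * ((Real.sign u) ^ m * |u| ^ (α + m))
      - (∏ k ∈ Finset.range m, (α + k + 1))⁻¹ * ((Real.sign v) ^ m * |v| ^ (α + m))|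
      = (∏ k ∈ Finset.range m, (α + k + 1))⁻¹
        * |(Real.sign u) ^ m * |u| ^ (α + m) - (Real.sign v) ^ m * |v| ^ (α + m)| := by
    rw [← mul_sub, abs_mul, abs_of_pos (by positivity)]
  rw [key]
  have hexp : α + (m:ℝ) - (σ + (m:ℝ)) = -s' := by rw [hσdef]; ring
  rw [hexp] at core
  have hPi : (0:ℝ) ≤ (∏ k ∈ Finset.range m, (α + k + 1))⁻¹ := by positivity
  calc (∏ k ∈ Finset.range m, (α + k + 1))⁻¹
        * |(Real.sign u) ^ m * |u| ^ (α + m) - (Real.sign v) ^ m * |v| ^ (α + m)|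
      ≤ (∏ k ∈ Finset.range m, (α + k + 1))⁻¹
        * (2 * max (α + (m:ℝ)) 1 * 2 ^ (σ + (m:ℝ))
            * (|u - v| ^ (σ + (m:ℝ)) * (|u| + |v|) ^ (-s'))) :=
        mul_le_mul_of_nonneg_left core hPi
    _ = (∏ k ∈ Finset.range m, (α + k + 1))⁻¹ * (2 * max (α + (m:ℝ)) 1 * 2 ^ (σ + (m:ℝ)))
        * |u - v| ^ (σ + (m:ℝ)) * (|u| + |v|) ^ (-s') := by ring

lemma rpow_base_antitone {x y w : ℝ} (hx : 0 < x) (hxy : x ≤ y) (hw : w ≤ 0) :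
    y ^ w ≤ x ^ w := by
  rcases eq_or_lt_of_le hxy with h | h
  · rw [h]
  rcases eq_or_lt_of_le hw with h2 | h2
  · rw [h2]; simp
  · exact (Real.rpow_lt_rpow_of_neg hx h h2).le

/-- small-scale contradiction helper: from `∀ t ∈ (0, ρ), t ^ e ≤ C` with `e < 0`, False. -/
lemma no_small_bound {e C ρ : ℝ} (he : e < 0) (hC : 0 < C) (hρ : 0 < ρ)
    (H : ∀ t : ℝ, 0 < t → t < ρ → t ^ e ≤ C) : False := by
  set t := min (ρ/2) (C ^ e⁻¹ / 2) with htdef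
  have hCe : (0:ℝ) < C ^ e⁻¹ := Real.rpow_pos_of_pos hC _
  have ht0 : 0 < t := by
    apply lt_min <;> [linarith; linarith]
  have htρ : t < ρ := (min_le_left _ _).trans_lt (by linarith)
  have htC : t < C ^ e⁻¹ := (min_le_right _ _).trans_lt (by linarith)
  have h1 : (C ^ e⁻¹) ^ e < t ^ e := Real.rpow_lt_rpow_of_neg ht0 htC he
  rw [← Real.rpow_mul hC.le, inv_mul_cancel₀ he.ne, Real.rpow_one] at h1
  exact absurd (H t ht0 htρ) (not_le.2 h1)

lemma upper1 {α σ s' : ℝ} (hα : 0 < α)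
    (hmem : PseudoMemOn Set.univ (fun x : ℝ => |x| ^ α) 0 σ s') : σ ≤ α + s' := by
  by_contra hc
  push_neg at hc
  have he : α + s' - σ < 0 := by linarith
  rw [PseudoMemOn] at hmem
  by_cases h0 : 0 ≤ σ
  · rw [if_pos h0] at hmem
    obtain ⟨C, hC, ρ, hρ, H⟩ := hmem
    refine no_small_bound he hC hρ ?_
    intro t ht0 htρ
    have htball : t ∈ Metric.ball (0:ℝ) ρ ∩ Set.univ := by
      constructor
      · rw [Metric.mem_ball, Real.dist_eq, sub_zero, abs_of_pos ht0]; exact htρ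
      · trivial
    have h0ball : (0:ℝ) ∈ Metric.ball (0:ℝ) ρ ∩ Set.univ :=
      ⟨Metric.mem_ball_self hρ, trivial⟩
    have spec := H t htball 0 h0ball
    simp only [abs_zero, Real.zero_rpow hα.ne', sub_zero, add_zero] at spec
    rw [abs_of_pos ht0, abs_of_nonneg (Real.rpow_nonneg ht0.le α)] at spec
    -- spec : t ^ α ≤ C * t ^ σ * t ^ (-s')
    have h2 := mul_le_mul_of_nonneg_right spec (Real.rpow_nonneg ht0.le (s' - σ))
    rw [← Real.rpow_add ht0, mul_assoc, mul_assoc, ← Real.rpow_add ht0,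
      ← Real.rpow_add ht0, show -s' + (s' - σ) = -σ by ring,
      show σ + -σ = 0 by ring, Real.rpow_zero, mul_one] at h2
    exact le_of_eq_of_le (by ring_nf) h2
  · rw [if_neg h0] at hmem
    push_neg at h0
    obtain ⟨C, hC, ρ, hρ, H⟩ := hmem
    set m : ℕ := (-⌊σ⌋).toNat with hmdef
    have hfl : ⌊σ⌋ < 0 := Int.floor_lt.2 (by exact_mod_cast h0)
    have hmcast : (m : ℝ) = -(⌊σ⌋ : ℝ) := by
      have h2 : ((-⌊σ⌋).toNat : ℤ) = -⌊σ⌋ := Int.toNat_of_nonneg (by omega)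
      rw [hmdef, ← Int.cast_natCast (R := ℝ), h2]
      push_cast; ring
    have hm1 : (1:ℝ) ≤ (m:ℝ) := by
      rw [hmcast]
      have : (⌊σ⌋ : ℝ) ≤ -1 := by exact_mod_cast (by omega : ⌊σ⌋ ≤ -1)
      linarith
    have hβ : (0:ℝ) < α + (m:ℝ) := by linarith
    have hP := prod_pos hα m
    have hPinv : (0:ℝ) < (∏ k ∈ Finset.range m, (α + k + 1))⁻¹ := by positivity
    refine no_small_bound he (mul_pos (mul_pos (prod_pos hα m) hC) one_pos) hρ ?_
    intro t ht0 htρ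
    have htball : t ∈ Metric.ball (0:ℝ) ρ ∩ Set.univ := by
      constructor
      · rw [Metric.mem_ball, Real.dist_eq, sub_zero, abs_of_pos ht0]; exact htρ
      · trivial
    have h0ball : (0:ℝ) ∈ Metric.ball (0:ℝ) ρ ∩ Set.univ :=
      ⟨Metric.mem_ball_self hρ, trivial⟩
    have spec := H t htball 0 h0ball
    rw [fun_sub_zero hα, iterInt_formula hα m t, iterInt_formula hα m 0] at spec
    simp only [abs_zero, Real.zero_rpow hβ.ne', mul_zero, sub_zero, add_zero] at spec
    rw [Real.sign_of_pos ht0, one_pow, one_mul, abs_of_pos ht0] at spec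
    rw [abs_of_pos (mul_pos hPinv (Real.rpow_pos_of_pos ht0 _))] at spec
    -- spec : P⁻¹ * t ^ (α + m) ≤ C * t ^ (σ + m) * t ^ (-s')
    set P := ∏ k ∈ Finset.range m, (α + k + 1)
    have h2 := mul_le_mul_of_nonneg_right spec
      (Real.rpow_nonneg ht0.le (s' - σ - (m:ℝ)))
    rw [mul_assoc, ← Real.rpow_add ht0, mul_assoc, mul_assoc, ← Real.rpow_add ht0,
      ← Real.rpow_add ht0, show -s' + (s' - σ - (m:ℝ)) = -(σ + (m:ℝ)) by ring,
      show σ + (m:ℝ) + -(σ + (m:ℝ)) = 0 by ring, Real.rpow_zero, mul_one] at h2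
    -- h2 : P⁻¹ * t ^ (α + m + (s' - σ - m)) ≤ C
    have h3 : t ^ (α + s' - σ) ≤ P * C := by
      rw [show α + (m:ℝ) + (s' - σ - (m:ℝ)) = α + s' - σ by ring] at h2
      calc t ^ (α + s' - σ) = P * (P⁻¹ * t ^ (α + s' - σ)) := by
            field_simp
        _ ≤ P * C := mul_le_mul_of_nonneg_left h2 hP.le
    calc t ^ (α + s' - σ) ≤ P * C := h3
      _ = P * C * 1 := by ring

lemma lower_bnd {α p h : ℝ} (hα : 0 < α) (hp : 0 < p) (hh : 0 < h) (hhp : h ≤ p) :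
    α * min (p ^ (α - 1)) ((2 * p) ^ (α - 1)) * h ≤ (p + h) ^ α - p ^ α := by
  rcases le_total 1 α with hge | hle
  · have hb := one_add_mul_self_le_rpow_one_add (s := h / p)
      (le_trans (by norm_num) (by positivity : (0:ℝ) ≤ h / p)) hge
    have hpα : (0:ℝ) < p ^ α := Real.rpow_pos_of_pos hp α
    have key := mul_le_mul_of_nonneg_left hb hpα.le
    have e1 : p ^ α * (1 + h / p) ^ α = (p + h) ^ α := by
      rw [← Real.mul_rpow hp.le (by positivity)]
      congr 1; field_simp
    have e2 : p ^ α * (α * (h / p)) = α * p ^ (α - 1) * h := by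
      rw [Real.rpow_sub hp, Real.rpow_one]; field_simp
    have hmin : min (p ^ (α - 1)) ((2 * p) ^ (α - 1)) ≤ p ^ (α - 1) := min_le_left _ _
    nlinarith [mul_le_mul_of_nonneg_left hmin (mul_nonneg hα.le hh.le)]
  · set a := p + h with hadef
    have ha : 0 < a := by positivity
    have hfrac : h / a ≤ 1 := by
      rw [div_le_one ha]; linarith
    have hb := rpow_one_add_le_one_add_mul_self (s := -(h / a)) (by linarith) hα.le hle
    have e0 : 1 + -(h / a) = p / a := by field_simp; rw [hadef]; ring
    rw [e0] at hb
    -- hb : (p / a) ^ α ≤ 1 + α * -(h / a)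
    have haα : (0:ℝ) < a ^ α := Real.rpow_pos_of_pos ha α
    have key := mul_le_mul_of_nonneg_left hb haα.le
    have e1 : a ^ α * (p / a) ^ α = p ^ α := by
      rw [← Real.mul_rpow ha.le (by positivity)]
      congr 1; field_simp
    have e2 : a ^ α * (α * (h / a)) = α * a ^ (α - 1) * h := by
      rw [Real.rpow_sub ha, Real.rpow_one]; field_simp
    have h2p : (2 * p) ^ (α - 1) ≤ a ^ (α - 1) :=
      rpow_base_antitone ha (by linarith) (by linarith)
    have hmin : min (p ^ (α - 1)) ((2 * p) ^ (α - 1)) ≤ (2 * p) ^ (α - 1) := min_le_right _ _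
    nlinarith [mul_le_mul_of_nonneg_left (hmin.trans h2p) (mul_nonneg hα.le hh.le)]

lemma mid_rpow_le {x y z w : ℝ} (hx : 0 < x) (h1 : x ≤ y) (h2 : y ≤ z) :
    y ^ w ≤ max (x ^ w) (z ^ w) := by
  rcases le_or_gt 0 w with hw | hw
  · exact le_max_of_le_right (Real.rpow_le_rpow (hx.le.trans h1) h2 hw)
  · exact le_max_of_le_left (rpow_base_antitone hx h1 hw.le)

lemma upper2_core {α σ s' : ℝ} (hα : 0 < α) (hc : 1 < σ)
    (hmem : PseudoMemOn' (fun x : ℝ => |x| ^ α) σ s') : False := by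
  obtain ⟨C, hC, ρ, hρ, H⟩ := hmem
  set p := ρ / 4 with hpdef
  have hp : 0 < p := by rw [hpdef]; linarith
  set c₁ := α * min (p ^ (α - 1)) ((2 * p) ^ (α - 1)) with hc1def
  have hc₁ : 0 < c₁ := by
    apply mul_pos hα
    apply lt_min <;> positivity
  set K := max ((2 * p) ^ (-s')) ((3 * p) ^ (-s')) with hKdef
  have hK : 0 < K := lt_max_of_lt_left (by positivity)
  have hq : 0 < σ - 1 := by linarith
  have hcck : 0 < (c₁ / (C * K)) ^ (σ - 1)⁻¹ :=
    Real.rpow_pos_of_pos (by positivity) _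
  set h := min p ((c₁ / (C * K)) ^ (σ - 1)⁻¹) / 2 with hhdef
  have hh0 : 0 < h := div_pos (lt_min hp hcck) two_pos
  have hhp : h ≤ p := by
    have := min_le_left p ((c₁ / (C * K)) ^ (σ - 1)⁻¹)
    rw [hhdef]; linarith
  have hhlt : h < (c₁ / (C * K)) ^ (σ - 1)⁻¹ := by
    have := min_le_right p ((c₁ / (C * K)) ^ (σ - 1)⁻¹)
    rw [hhdef]; linarith
  have humem : p + h ∈ Metric.ball (0:ℝ) ρ ∩ Set.univ := by
    refine ⟨?_, trivial⟩
    rw [Metric.mem_ball, Real.dist_eq, sub_zero, abs_of_pos (by linarith)]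
    rw [hpdef] at hhp ⊢; linarith
  have hvmem : p ∈ Metric.ball (0:ℝ) ρ ∩ Set.univ := by
    refine ⟨?_, trivial⟩
    rw [Metric.mem_ball, Real.dist_eq, sub_zero, abs_of_pos hp]
    rw [hpdef]; linarith
  have spec := H (p + h) humem p hvmem
  simp only [sub_zero] at spec
  rw [abs_of_pos (by linarith : (0:ℝ) < p + h), abs_of_pos hp,
    show p + h - p = h by ring, abs_of_pos hh0] at spec
  have low := lower_bnd hα hp hh0 hhp
  have habs : (p + h) ^ α - p ^ α ≤ |(p + h) ^ α - p ^ α| := le_abs_self _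
  have hmid : (p + h + p) ^ (-s') ≤ K := by
    rw [hKdef]
    exact mid_rpow_le (by positivity) (by linarith) (by linarith)
  have step1 : c₁ * h ≤ C * h ^ σ * K := by
    calc c₁ * h ≤ (p + h) ^ α - p ^ α := low
      _ ≤ |(p + h) ^ α - p ^ α| := habs
      _ ≤ C * h ^ σ * (p + h + p) ^ (-s') := spec
      _ ≤ C * h ^ σ * K := by
          apply mul_le_mul_of_nonneg_left hmid
          positivity
  have hsplit : h ^ σ = h ^ (σ - 1) * h := by
    rw [show σ = (σ - 1) + 1 by ring, Real.rpow_add hh0, Real.rpow_one]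
    ring_nf
  have step2 : c₁ ≤ C * K * h ^ (σ - 1) := by
    rw [hsplit] at step1
    have h3 : c₁ * h ≤ C * K * h ^ (σ - 1) * h := by nlinarith [step1]
    exact le_of_mul_le_mul_right h3 hh0
  have hfin : h ^ (σ - 1) < c₁ / (C * K) := by
    calc h ^ (σ - 1) < ((c₁ / (C * K)) ^ (σ - 1)⁻¹) ^ (σ - 1) :=
          Real.rpow_lt_rpow hh0.le hhlt hq
      _ = c₁ / (C * K) := by
          rw [← Real.rpow_mul (by positivity), inv_mul_cancel₀ hq.ne', Real.rpow_one]
  have hlast : C * K * h ^ (σ - 1) < c₁ := by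
    calc C * K * h ^ (σ - 1) < C * K * (c₁ / (C * K)) :=
          mul_lt_mul_of_pos_left hfin (by positivity)
      _ = c₁ := by field_simp
  linarith

end PFhelp

/-- the pseudo 2-microlocal frontier of `x ↦ |x|^α` at `0` is
`min (α + s') 1` for every `s'`. -/
theorem pseudoFrontier_abs_rpow (α : ℝ) (hα : 0 < α) :
    ∀ s' : ℝ, pseudoFrontierOn Set.univ (fun x : ℝ => |x| ^ α) 0 s'
      = ((min (α + s') 1 : ℝ) : EReal) := by
  intro s'
  apply le_antisymm
  · apply sSup_le
    rintro x ⟨σ, rfl, hσ⟩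
    rw [EReal.coe_le_coe_iff]
    refine le_min (PFhelp.upper1 hα hσ) ?_
    by_contra hc
    push_neg at hc
    have h0 : 0 ≤ σ := by linarith
    rw [PseudoMemOn, if_pos h0] at hσ
    exact PFhelp.upper2_core hα hc hσ
  · apply le_sSup
    refine ⟨min (α + s') 1, rfl, ?_⟩
    rcases le_or_gt 0 (min (α + s') 1) with h | h
    · exact PFhelp.mem_nonneg hα h (min_le_right _ _) (min_le_left _ _)
    · have h1 : α + s' < 1 := by
        by_contra hge
        push_neg at hge
        rw [min_eq_right hge] at h
        linarith
      rw [min_eq_left h1.le]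
      rw [min_eq_left h1.le] at h
      exact PFhelp.mem_neg hα h

end
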